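/- Let g ≥ 1 and n ≥ 3 with (n,g) not among (4,1), (4,2), (5,1). For all integers r with 1 ≤ r ≤ n−2, one has (r+2)^r · t_{g,n−r−1}^{r+1} ≤ 3·t_{g,n−2}², and equality holds if and only if r = 1 or (g,r,n) = (3,2,4). -/
import Mathlib


/-- The `g`-Sylvester sequence: `s_{g,1} = g+1`, `s_{g,k+1} = s_{g,k}(s_{g,k}-1)+1`.
(The value at `0` is junk and never used.) -/
def sylv (g : ℕ) : ℕ → ℕ
  | 0 => 0
  | 1 => g + 1
  | k + 2 => sylv g (k + 1) * (sylv g (k + 1) - 1) + 1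

/-- The truncated `g`-Sylvester sequence `t_{g,k} = s_{g,k} - 1`. -/
def tsylv (g k : ℕ) : ℕ := sylv g k - 1

lemma sylv_pos (g k : ℕ) (hk : 1 ≤ k) : 1 ≤ sylv g k := by
  match k, hk with
  | 1, _ => simp [sylv]
  | (k+2), _ => simp [sylv]

lemma tsylv_one (g : ℕ) : tsylv g 1 = g := by simp [tsylv, sylv]

lemma tsylv_succ (g k : ℕ) (hk : 1 ≤ k) :
    tsylv g (k+1) = tsylv g k * (tsylv g k + 1) := by
  obtain ⟨j, rfl⟩ : ∃ j, k = j + 1 := ⟨k - 1, by omega⟩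
  have h := sylv_pos g (j+1) (by omega)
  show sylv g (j+1+1) - 1 = _
  have hdef : sylv g (j+2) = sylv g (j+1) * (sylv g (j+1) - 1) + 1 := rfl
  obtain ⟨u, hu⟩ : ∃ u, sylv g (j+1) = u + 1 := ⟨sylv g (j+1) - 1, by omega⟩
  simp only [tsylv, hdef, hu]
  simp [Nat.add_sub_cancel]
  ring

lemma tsylv_ge_g (g k : ℕ) (hg : 1 ≤ g) (hk : 1 ≤ k) : g ≤ tsylv g k := by
  induction k, hk using Nat.le_induction with
  | base => simp [tsylv_one]
  | succ k hk ih =>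
    rw [tsylv_succ g k hk]
    calc g ≤ tsylv g k := ih
    _ ≤ tsylv g k * (tsylv g k + 1) := Nat.le_mul_of_pos_right _ (by omega)

lemma tsylv_pos (g k : ℕ) (hg : 1 ≤ g) (hk : 1 ≤ k) : 1 ≤ tsylv g k :=
  le_trans hg (tsylv_ge_g g k hg hk)

lemma tsylv_two_le (g k : ℕ) (hg : 1 ≤ g) (hk : 2 ≤ k) : 2 ≤ tsylv g k := by
  obtain ⟨j, rfl⟩ : ∃ j, k = j + 1 := ⟨k - 1, by omega⟩
  rw [tsylv_succ g j (by omega)]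
  have := tsylv_pos g j hg (by omega)
  nlinarith

lemma tsylv_six_le (g k : ℕ) (hg : 1 ≤ g) (hk : 3 ≤ k) : 6 ≤ tsylv g k := by
  obtain ⟨j, rfl⟩ : ∃ j, k = j + 1 := ⟨k - 1, by omega⟩
  rw [tsylv_succ g j (by omega)]
  have := tsylv_two_le g j hg (by omega)
  nlinarith

/-- Key combinatorial inequality. -/
lemma pow_key (r : ℕ) (hr : 2 ≤ r) : (r+3)^(r+1) < 2^(r+1) * (r+2)^r := by
  induction r, hr using Nat.le_induction with
  | base => norm_num
  | succ r hr ih =>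
    have h1 : (r+4)*(r+2) ≤ (r+3)^2 := by nlinarith
    have h2 : (r+4)^2 ≤ 2*(r+3)^2 := by nlinarith
    have key : (r+4)^(r+2) * (r+2)^r ≤ 2 * ((r+3)^(r+1) * (r+3)^(r+1)) := by
      calc (r+4)^(r+2) * (r+2)^r = (r+4)^2 * ((r+4)*(r+2))^r := by
            rw [mul_pow]; ring
      _ ≤ (2*(r+3)^2) * ((r+3)^2)^r := by
            exact Nat.mul_le_mul h2 (Nat.pow_le_pow_left h1 r)
      _ = 2 * ((r+3)^(r+1) * (r+3)^(r+1)) := by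
            rw [← pow_mul]; ring
    have key2 : 2 * ((r+3)^(r+1) * (r+3)^(r+1)) < 2^(r+2) * (r+3)^(r+1) * (r+2)^r := by
      have hpos : 0 < 2 * (r+3)^(r+1) := by positivity
      calc 2 * ((r+3)^(r+1) * (r+3)^(r+1)) = (2 * (r+3)^(r+1)) * (r+3)^(r+1) := by ring
      _ < (2 * (r+3)^(r+1)) * (2^(r+1) * (r+2)^r) := by
            exact Nat.mul_lt_mul_of_le_of_lt (le_refl _) ih hpos
      _ = 2^(r+2) * (r+3)^(r+1) * (r+2)^r := by ring
    have := lt_of_le_of_lt key key2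
    have hpow : 0 < (r+2)^r := by positivity
    exact Nat.lt_of_mul_lt_mul_right (a := (r+2)^r) this

/-- Step inequality. -/
lemma step_key (r t : ℕ) (hr : 2 ≤ r) (ht : 1 ≤ t) :
    (r+3)^(r+1) * t < (r+2)^r * (t+1)^(r+1) := by
  obtain ⟨k, rfl⟩ : ∃ k, r = k + 2 := ⟨r - 2, by omega⟩
  have h1 : 2^(k+3) * t ≤ (t+1)^(k+3) := by
    calc 2^(k+3)*t = 2^(k+1) * (4*t) := by ring
    _ ≤ 2^(k+1) * (t+1)^2 := Nat.mul_le_mul_left _ (by nlinarith)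
    _ ≤ (t+1)^(k+1) * (t+1)^2 :=
        Nat.mul_le_mul_right _ (Nat.pow_le_pow_left (by omega) _)
    _ = (t+1)^(k+3) := by ring
  have h2 := pow_key (k+2) (by omega)
  calc (k+2+3)^(k+2+1) * t < (2^(k+3)*(k+4)^(k+2)) * t :=
        mul_lt_mul_of_pos_right h2 (by omega)
  _ = (k+4)^(k+2) * (2^(k+3)*t) := by ring
  _ ≤ (k+4)^(k+2) * (t+1)^(k+3) := Nat.mul_le_mul_left _ h1
  _ = (k+2+2)^(k+2) * (t+1)^(k+2+1) := by ring

/-- For `g ≥ 1`, `n ≥ 3` with `(n,g)` not among `(4,1)`, `(4,2)`,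
`(5,1)`, and `1 ≤ r ≤ n-2`, one has `(r+2)^r · t_{g,n-r-1}^{r+1} ≤ 3·t_{g,n-2}²`,
with equality iff `r = 1` or `(g,r,n) = (3,2,4)`. -/
theorem sylvester_ineq_iii
    (g n : ℕ) (hg : 1 ≤ g) (hn : 3 ≤ n)
    (h41 : ¬(n = 4 ∧ g = 1)) (h42 : ¬(n = 4 ∧ g = 2)) (h51 : ¬(n = 5 ∧ g = 1)) :
    ∀ r, 1 ≤ r → r ≤ n - 2 →
      (r + 2) ^ r * tsylv g (n - r - 1) ^ (r + 1) ≤ 3 * tsylv g (n - 2) ^ 2 ∧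
        ((r + 2) ^ r * tsylv g (n - r - 1) ^ (r + 1) = 3 * tsylv g (n - 2) ^ 2 ↔
          r = 1 ∨ (g = 3 ∧ r = 2 ∧ n = 4)) := by
  have key : ∀ r, 2 ≤ r → r ≤ n - 2 →
      (r + 2) ^ r * tsylv g (n - r - 1) ^ (r + 1) ≤ 3 * tsylv g (n - 2) ^ 2 ∧
      ((r + 2) ^ r * tsylv g (n - r - 1) ^ (r + 1) = 3 * tsylv g (n - 2) ^ 2 →
        g = 3 ∧ r = 2 ∧ n = 4) := by
    intro r hr
    induction r, hr using Nat.le_induction with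
    | base =>
      intro hn2
      have hn4 : 4 ≤ n := by omega
      set t := tsylv g (n - 3) with htdef
      have hidx : n - 2 - 1 = n - 3 := by omega
      have hidx2 : n - 2 = (n - 3) + 1 := by omega
      have hrw : tsylv g (n - 2) = t * (t + 1) := by
        rw [hidx2, tsylv_succ g (n-3) (by omega)]
      have ht3 : 3 ≤ t ∧ (t = 3 → g = 3 ∧ n = 4) := by
        by_cases h4 : n = 4
        · subst h4
          have : t = g := by rw [htdef]; exact tsylv_one g
          constructor
          · omega
          · intro h; omega
        · by_cases h5 : n = 5
          · subst h5
            have hg2 : 2 ≤ g := by omega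
            have : 6 ≤ t := by
              rw [htdef]
              show 6 ≤ tsylv g 2
              rw [tsylv_succ g 1 (by omega), tsylv_one]
              nlinarith
            omega
          · have : 6 ≤ t := tsylv_six_le g (n-3) hg (by omega)
            omega
      obtain ⟨ht, hteq⟩ := ht3
      rw [hidx, hrw]
      constructor
      · show 4^2 * t^(2+1) ≤ 3 * (t*(t+1))^2
        obtain ⟨s, hts⟩ : ∃ s, t = s + 3 := ⟨t - 3, by omega⟩
        rw [hts]
        have hfac : 3*((s+3)*(s+3+1))^2
            = 4^2*(s+3)^(2+1) + (s+3)^2*(3*s^2+8*s) := by ring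
        linarith [hfac, Nat.zero_le ((s+3)^2*(3*s^2+8*s))]
      · intro heq
        have heq' : 4^2 * t^(2+1) = 3 * (t*(t+1))^2 := heq
        have h4 : ¬ 4 ≤ t := by
          intro h4
          obtain ⟨s, hs⟩ : ∃ s, t = s + 4 := ⟨t - 4, by omega⟩
          rw [hs] at heq'
          have hfac : 3*((s+4)*(s+4+1))^2
              = 4^2*(s+4)^(2+1) + (s+4)^2*(3*s^2+14*s+11) := by ring
          have hpos : 0 < (s+4)^2*(3*s^2+14*s+11) := by positivity
          linarith [heq', hfac, hpos]
        have : t = 3 := by omega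
        obtain ⟨hg3, hn4'⟩ := hteq this
        exact ⟨hg3, rfl, hn4'⟩
    | succ r hr ih =>
      intro hrn
      have hrn' : r ≤ n - 2 := by omega
      obtain ⟨hle, _⟩ := ih hrn'
      set t := tsylv g (n - r - 2) with htdef
      have ht : 1 ≤ t := tsylv_pos g (n - r - 2) hg (by omega)
      have hidx : n - (r + 1) - 1 = n - r - 2 := by omega
      have hidx2 : n - r - 1 = (n - r - 2) + 1 := by omega
      have hrw : tsylv g (n - r - 1) = t * (t + 1) := by
        rw [hidx2, tsylv_succ g (n - r - 2) (by omega)]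
      rw [hrw] at hle
      have hstep := step_key r t hr ht
      have hlt : (r + 1 + 2) ^ (r + 1) * tsylv g (n - (r+1) - 1) ^ (r + 1 + 1) <
          3 * tsylv g (n - 2) ^ 2 := by
        rw [hidx, ← htdef]
        calc (r + 1 + 2) ^ (r + 1) * t ^ (r + 1 + 1)
            = ((r + 3) ^ (r + 1) * t) * t ^ (r + 1) := by ring
        _ < ((r + 2) ^ r * (t + 1) ^ (r + 1)) * t ^ (r + 1) :=
            mul_lt_mul_of_pos_right hstep (by positivity)
        _ = (r + 2) ^ r * (t * (t + 1)) ^ (r + 1) := by rw [mul_pow]; ring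
        _ ≤ 3 * tsylv g (n - 2) ^ 2 := hle
      exact ⟨le_of_lt hlt, fun h => absurd h (ne_of_lt hlt)⟩
  intro r hr1 hr2
  rcases Nat.lt_or_ge r 2 with h | h
  · have hr : r = 1 := by omega
    subst hr
    have hidx : n - 1 - 1 = n - 2 := by omega
    rw [hidx]
    constructor
    · apply le_of_eq; ring
    · constructor
      · intro _; left; rfl
      · intro _; ring
  · obtain ⟨hle, heq⟩ := key r h hr2
    refine ⟨hle, ⟨fun h' => Or.inr (heq h'), ?_⟩⟩
    rintro (h1 | ⟨hg3, hr3, hn4⟩)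
    · omega
    · subst hg3; subst hr3; subst hn4
      norm_num [tsylv, sylv]
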